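/- (Corollary 2.6, periodic case) Assume G is conserved by X. If a differentiable curve x : ℝ → E solves the geometrically dissipated system and is periodic, i.e. there exists T > 0 with x(t + T) = x(t) for all t ∈ ℝ, then x(t) ∈ Inv for all t ∈ ℝ and x is also a solution of the unperturbed system, i.e. x′(t) = X(x(t)) for all t ∈ ℝ. -/

import Mathlib

open scoped RealInnerProductSpace BigOperators
open Filter Topology

/-- `Σ^{(a₁,…,a_r)}_{(b₁,…,b_s)}`: the `r × s` real matrix whose `(i,j)` entry is `⟪b j, a i⟫`. -/
noncomputable def sigmaMat {E : Type*} [NormedAddCommGroup E] [InnerProductSpace ℝ E]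
    {r s : ℕ} (a : Fin r → E) (b : Fin s → E) : Matrix (Fin r) (Fin s) ℝ :=
  Matrix.of fun i j => ⟪b j, a i⟫

/-- The standard control vector `v₀(w₁,…,w_{k+1},u)`: there are `k+1` vectors `w`
(`k+1 ≥ 1` encodes the requirement that the number of `w`-vectors is at least one).
With `0`-indexing, the sign `(-1)^(i+k+1)` below is the paper's `(-1)^{i+k+1}` for
`1`-indexed `i` and `k+1` vectors. -/
noncomputable def stdControl {E : Type*} [NormedAddCommGroup E] [InnerProductSpace ℝ E]
    {k : ℕ} (w : Fin (k + 1) → E) (u : E) : E :=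
  (∑ i : Fin (k + 1),
      ((-1 : ℝ) ^ ((i : ℕ) + k + 1) *
        (sigmaMat w (Fin.snoc (w ∘ i.succAbove) u)).det) • w i) +
    (sigmaMat w w).det • u

/-- The family of gradients `(∇F₁(x),…,∇F_{k+1}(x),∇G(x))`. -/
noncomputable def gradFam {E : Type*} [NormedAddCommGroup E] [InnerProductSpace ℝ E]
    [FiniteDimensional ℝ E] {k : ℕ} (F : Fin (k + 1) → E → ℝ) (G : E → ℝ) (x : E) :
    Fin (k + 1 + 1) → E :=
  Fin.snoc (fun i => gradient (F i) x) (gradient G x)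

/-- The standard control vector field `x ↦ v₀(∇F₁(x),…,∇F_{k+1}(x),∇G(x))`. -/
noncomputable def v0Field {E : Type*} [NormedAddCommGroup E] [InnerProductSpace ℝ E]
    [FiniteDimensional ℝ E] {k : ℕ} (F : Fin (k + 1) → E → ℝ) (G : E → ℝ) (x : E) : E :=
  stdControl (fun i => gradient (F i) x) (gradient G x)

/-- `det Σ^{(∇F₁(x),…,∇F_{k+1}(x),∇G(x))}_{(∇F₁(x),…,∇F_{k+1}(x),∇G(x))}`. -/
noncomputable def gramDetFG {E : Type*} [NormedAddCommGroup E] [InnerProductSpace ℝ E]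
    [FiniteDimensional ℝ E] {k : ℕ} (F : Fin (k + 1) → E → ℝ) (G : E → ℝ) (x : E) : ℝ :=
  (sigmaMat (gradFam F G x) (gradFam F G x)).det

/-- The set `Inv = {x | det Σ^{(∇F(x),∇G(x))}_{(∇F(x),∇G(x))} = 0}`. -/
def invSet {E : Type*} [NormedAddCommGroup E] [InnerProductSpace ℝ E]
    [FiniteDimensional ℝ E] {k : ℕ} (F : Fin (k + 1) → E → ℝ) (G : E → ℝ) : Set E :=
  {x | gramDetFG F G x = 0}

/-!
Expanding along the last row, `⟪a, v₀(w, u)⟫ = det Σ^{(w,a)}_{(w,u)}`. Hence `v₀(w, u)` is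
orthogonal to every `wᵢ`, `‖v₀(w, u)‖² = det Σ^{(w)}_{(w)} · det Σ^{(w,u)}_{(w,u)}`, and along a
solution of the dissipated system `(G ∘ x)' = ⟪∇G, X⟫ - ⟪∇G, v₀⟫ = -det Σ^{(∇F,∇G)}_{(∇F,∇G)} ≤ 0`,
a Gram determinant being nonnegative. A periodic nonincreasing function is constant, so this
determinant vanishes along `x`, and then so does `v₀`.
-/

theorem Fin.snoc_comp_castSucc_succAbove {α : Type*} {n : ℕ} (w : Fin (n + 1) → α) (u : α)
    (i : Fin (n + 1)) :
    (Fin.snoc w u : Fin (n + 2) → α) ∘ i.castSucc.succAbove = Fin.snoc (w ∘ i.succAbove) u := by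
  funext m
  refine Fin.lastCases ?_ (fun _ => ?_) m
  · rw [Function.comp_apply, Fin.succAbove_castSucc_of_le _ _ (Fin.le_last _)]
    simp
  · simp [Fin.castSucc_succAbove_castSucc]

theorem Function.Periodic.eq_of_antitone {α β : Type*} [AddCommGroup α] [LinearOrder α]
    [IsOrderedAddMonoid α] [Archimedean α] [PartialOrder β] {f : α → β} {T : α}
    (hf : Function.Periodic f T) (hT : 0 < T) (hanti : Antitone f) (s t : α) : f s = f t := by
  wlog hst : s ≤ t generalizing s t
  · exact (this t s (le_of_not_ge hst)).symm
  obtain ⟨n, hn⟩ := Archimedean.arch (t - s) hT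
  refine le_antisymm ?_ (hanti hst)
  calc f s = f (s + n • T) := ((hf.nsmul n) s).symm
    _ ≤ f t := hanti (sub_le_iff_le_add'.mp hn)

theorem Function.Periodic.hasDerivAt_eq_zero_of_nonpos {f f' : ℝ → ℝ} {T : ℝ}
    (hf : Function.Periodic f T) (hT : 0 < T) (hderiv : ∀ t, HasDerivAt f (f' t) t)
    (hnonpos : ∀ t, f' t ≤ 0) (t : ℝ) : f' t = 0 := by
  have hconst : f = fun _ => f t :=
    funext fun s => hf.eq_of_antitone hT (antitone_of_hasDerivAt_nonpos hderiv hnonpos) s t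
  have := hderiv t
  rw [hconst] at this
  exact this.unique (hasDerivAt_const t (f t))

section ControlVector

variable {E : Type*} [NormedAddCommGroup E] [InnerProductSpace ℝ E]

@[simp]
theorem sigmaMat_apply {r s : ℕ} (a : Fin r → E) (b : Fin s → E) (i : Fin r) (j : Fin s) :
    sigmaMat a b i j = ⟪b j, a i⟫ := rfl

theorem sigmaMat_submatrix {r s r' s' : ℕ} (a : Fin r → E) (b : Fin s → E) (f : Fin r' → Fin r)
    (g : Fin s' → Fin s) : (sigmaMat a b).submatrix f g = sigmaMat (a ∘ f) (b ∘ g) := rfl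

theorem sigmaMat_self_eq_gram {m : ℕ} (v : Fin m → E) : sigmaMat v v = Matrix.gram ℝ v := by
  ext i j
  simp [Matrix.gram, real_inner_comm]

theorem sigmaMat_self_det_nonneg {m : ℕ} (v : Fin m → E) : 0 ≤ (sigmaMat v v).det := by
  rw [sigmaMat_self_eq_gram]
  exact (Matrix.posSemidef_gram ℝ v).det_nonneg

theorem inner_stdControl {k : ℕ} (w : Fin (k + 1) → E) (u a : E) :
    ⟪a, stdControl w u⟫ = (sigmaMat (Fin.snoc w a) (Fin.snoc w u)).det := by
  rw [Matrix.det_succ_row _ (Fin.last _), Fin.sum_univ_castSucc, stdControl, inner_add_right,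
    inner_sum, real_inner_smul_right]
  simp only [sigmaMat_submatrix, Fin.succAbove_last, Fin.snoc_comp_castSucc,
    Fin.snoc_comp_castSucc_succAbove, real_inner_smul_right, sigmaMat_apply, Fin.snoc_last,
    Fin.snoc_castSucc, Fin.val_last, Fin.val_castSucc, real_inner_comm a]
  congr 1
  · exact Finset.sum_congr rfl fun i _ => by ring
  · rw [Even.neg_one_pow ⟨k + 1, rfl⟩]
    ring

theorem inner_stdControl_eq_zero {k : ℕ} (w : Fin (k + 1) → E) (u : E) (i : Fin (k + 1)) :
    ⟪w i, stdControl w u⟫ = 0 := by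
  rw [inner_stdControl]
  exact Matrix.det_zero_of_row_eq (Fin.castSucc_lt_last i).ne (funext fun j => by simp)

theorem inner_stdControl_self {k : ℕ} (w : Fin (k + 1) → E) (u : E) :
    ⟪stdControl w u, stdControl w u⟫ =
      (sigmaMat w w).det * (sigmaMat (Fin.snoc w u) (Fin.snoc w u)).det := by
  nth_rewrite 1 [stdControl]
  rw [inner_add_left, sum_inner, real_inner_smul_left, inner_stdControl]
  simp [real_inner_smul_left, inner_stdControl_eq_zero]

theorem stdControl_eq_zero_of_det_eq_zero {k : ℕ} (w : Fin (k + 1) → E) (u : E)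
    (h : (sigmaMat (Fin.snoc w u) (Fin.snoc w u)).det = 0) : stdControl w u = 0 := by
  rw [← inner_self_eq_zero (𝕜 := ℝ), inner_stdControl_self, h, mul_zero]

end ControlVector

section DissipatedSystem

variable {E : Type*} [NormedAddCommGroup E] [InnerProductSpace ℝ E] [FiniteDimensional ℝ E]
  {k : ℕ} (F : Fin (k + 1) → E → ℝ) (G : E → ℝ)

theorem inner_gradient_v0Field (y : E) : ⟪gradient G y, v0Field F G y⟫ = gramDetFG F G y :=
  inner_stdControl _ _ _

theorem gramDetFG_nonneg (y : E) : 0 ≤ gramDetFG F G y :=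
  sigmaMat_self_det_nonneg _

theorem v0Field_eq_zero_of_mem_invSet {y : E} (hy : y ∈ invSet F G) : v0Field F G y = 0 :=
  stdControl_eq_zero_of_det_eq_zero _ _ hy

theorem hasDerivAt_comp_of_dissipated {X : E → E} (hG : Differentiable ℝ G)
    (hcons : ∀ y : E, ⟪gradient G y, X y⟫ = 0) {x : ℝ → E}
    (hx : ∀ t : ℝ, HasDerivAt x (X (x t) - v0Field F G (x t)) t) (t : ℝ) :
    HasDerivAt (G ∘ x) (-gramDetFG F G (x t)) t := by
  have := (hG (x t)).hasGradientAt.hasFDerivAt.comp_hasDerivAt t (hx t)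
  rwa [InnerProductSpace.toDual_apply_apply, inner_sub_right, hcons, inner_gradient_v0Field,
    zero_sub] at this

end DissipatedSystem

theorem periodic_solution_mem_inv_and_unperturbed_general
    {E : Type*} [NormedAddCommGroup E] [InnerProductSpace ℝ E]
    [FiniteDimensional ℝ E] {k : ℕ} (F : Fin (k + 1) → E → ℝ) (G : E → ℝ) (X : E → E)
    (hG : ContDiff ℝ 1 G)
    (hcons : ∀ y : E, ⟪gradient G y, X y⟫ = 0)
    (x : ℝ → E) (hx : ∀ t : ℝ, HasDerivAt x (X (x t) - v0Field F G (x t)) t)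
    (T : ℝ) (hT : 0 < T) (hper : ∀ t : ℝ, x (t + T) = x t) :
    (∀ t : ℝ, x t ∈ invSet F G) ∧ ∀ t : ℝ, HasDerivAt x (X (x t)) t := by
  have hinv : ∀ t, x t ∈ invSet F G := fun t =>
    neg_eq_zero.mp <| (Function.Periodic.comp hper G).hasDerivAt_eq_zero_of_nonpos hT
      (hasDerivAt_comp_of_dissipated F G (hG.differentiable one_ne_zero) hcons hx)
      (fun s => neg_nonpos.mpr (gramDetFG_nonneg F G (x s))) t
  refine ⟨hinv, fun t => ?_⟩
  simpa [v0Field_eq_zero_of_mem_invSet F G (hinv t)] using hx t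

/-- Corollary 2.6, periodic case: a periodic solution of the geometrically
dissipated system is contained in `Inv` and is also a solution of the unperturbed system. -/
theorem periodic_solution_mem_inv_and_unperturbed
    {E : Type*} [NormedAddCommGroup E] [InnerProductSpace ℝ E]
    [FiniteDimensional ℝ E] {k : ℕ} (F : Fin (k + 1) → E → ℝ) (G : E → ℝ) (X : E → E)
    (hF : ∀ i, ContDiff ℝ 1 (F i)) (hG : ContDiff ℝ 1 G)
    (hcons : ∀ y : E, ⟪gradient G y, X y⟫ = 0)
    (x : ℝ → E) (hx : ∀ t : ℝ, HasDerivAt x (X (x t) - v0Field F G (x t)) t)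
    (T : ℝ) (hT : 0 < T) (hper : ∀ t : ℝ, x (t + T) = x t) :
    (∀ t : ℝ, x t ∈ invSet F G) ∧ ∀ t : ℝ, HasDerivAt x (X (x t)) t :=
  periodic_solution_mem_inv_and_unperturbed_general F G X hG hcons x hx T hT hper
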